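/- arXiv:1102.0681 — 2 statements merged into one kernel-verified Lean document; each statement's English description precedes it below -/
import Mathlib

section
/- Let 0 < p₂ < p₁ ≤ ∞, N ∈ ℕ, and k ∈ ℕ with 1 ≤ k ≤ N. Then a_k(id : ℓ_{p₁}^N → ℓ_{p₂}^N) = (N − k + 1)^{1/p₂ − 1/p₁}, where 1/∞ is interpreted as 0. -/
/-!
For the upper bound, the coordinate projection onto `k - 1` coordinates leaves the remaining
`N - k + 1` coordinates, on which Hölder's inequality gives
`‖y‖_{p₂} ≤ (N - k + 1)^{1/p₂ - 1/p₁} ‖y‖_{p₁}`.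
For the lower bound, the kernel of any `A` of rank `< k` has dimension at least `N - k + 1`.
An extreme point of its intersection with the unit cube (Krein–Milman) has at least that many
coordinates of modulus one, and for such a vector of the cube `‖x‖_{p₂} / ‖x‖_{p₁}` is at least
`(N - k + 1)^{1/p₂ - 1/p₁}`.
-/

open scoped ENNReal

/-- The `ℓ_p` (quasi-)norm on `ℝ^N`. -/
noncomputable def lpnorm (p : ℝ≥0∞) {N : ℕ} (x : Fin N → ℝ) : ℝ :=
  if p = ∞ then ⨆ i, |x i| else (∑ i, |x i| ^ p.toReal) ^ (1 / p.toReal)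

/-- The `k`-th approximation number of the identity map `id : ℓ_{p₁}^N → ℓ_{p₂}^N`. -/
noncomputable def approxNumId (p₁ p₂ : ℝ≥0∞) (N k : ℕ) : ℝ :=
  sInf {r : ℝ | ∃ A : (Fin N → ℝ) →ₗ[ℝ] (Fin N → ℝ),
    Module.rank ℝ (LinearMap.range A) < k ∧
    r = sSup {c : ℝ | ∃ x : Fin N → ℝ, lpnorm p₁ x ≤ 1 ∧ c = lpnorm p₂ (x - A x)}}

open Finset

section lpnorm

variable {N : ℕ} {p : ℝ≥0∞}

theorem lpnorm_top (x : Fin N → ℝ) : lpnorm ∞ x = ‖x‖ := by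
  rw [lpnorm, if_pos rfl]
  refine le_antisymm (Real.iSup_le (fun i => ?_) (norm_nonneg x)) ?_
  · simpa only [Real.norm_eq_abs] using norm_le_pi_norm x i
  · refine (pi_norm_le_iff_of_nonneg (Real.iSup_nonneg fun i => abs_nonneg (x i))).2 fun i => ?_
    exact le_ciSup (f := fun i => |x i|) (Set.finite_range _).bddAbove i

theorem lpnorm_of_ne_top (hp : p ≠ ∞) (x : Fin N → ℝ) :
    lpnorm p x = (∑ i, |x i| ^ p.toReal) ^ (1 / p.toReal) :=
  if_neg hp

theorem lpnorm_nonneg (p : ℝ≥0∞) (x : Fin N → ℝ) : 0 ≤ lpnorm p x := by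
  rcases eq_or_ne p ∞ with rfl | hp
  · exact (lpnorm_top x).symm ▸ norm_nonneg x
  · rw [lpnorm_of_ne_top hp]
    positivity

theorem lpnorm_mono {x y : Fin N → ℝ} (h : ∀ i, |x i| ≤ |y i|) : lpnorm p x ≤ lpnorm p y := by
  rcases eq_or_ne p ∞ with rfl | hp
  · rw [lpnorm_top, lpnorm_top]
    exact pi_norm_le_iff_of_nonneg (norm_nonneg y) |>.2 fun i =>
      (h i).trans (by simpa only [Real.norm_eq_abs] using norm_le_pi_norm y i)
  · rw [lpnorm_of_ne_top hp, lpnorm_of_ne_top hp]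
    exact Real.rpow_le_rpow (by positivity)
      (sum_le_sum fun i _ => Real.rpow_le_rpow (abs_nonneg _) (h i) ENNReal.toReal_nonneg)
      (by positivity)

theorem abs_le_lpnorm (hp : p ≠ 0) (x : Fin N → ℝ) (i : Fin N) : |x i| ≤ lpnorm p x := by
  rcases eq_or_ne p ∞ with rfl | hp'
  · simpa only [lpnorm_top, Real.norm_eq_abs] using norm_le_pi_norm x i
  have hq : 0 < p.toReal := ENNReal.toReal_pos hp hp'
  calc |x i| = (|x i| ^ p.toReal) ^ (1 / p.toReal) := by
        rw [← Real.rpow_mul (abs_nonneg _), mul_one_div_cancel hq.ne', Real.rpow_one]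
    _ ≤ lpnorm p x := by
        rw [lpnorm_of_ne_top hp']
        gcongr
        exact single_le_sum (f := fun j => |x j| ^ p.toReal) (fun j _ => by positivity) (mem_univ i)

theorem norm_le_lpnorm (hp : p ≠ 0) (x : Fin N → ℝ) : ‖x‖ ≤ lpnorm p x :=
  pi_norm_le_iff_of_nonneg (lpnorm_nonneg p x) |>.2 fun i => abs_le_lpnorm hp x i

theorem lpnorm_smul (hp : p ≠ 0) {c : ℝ} (hc : 0 ≤ c) (x : Fin N → ℝ) :
    lpnorm p (c • x) = c * lpnorm p x := by
  rcases eq_or_ne p ∞ with rfl | hp'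
  · rw [lpnorm_top, lpnorm_top, norm_smul, Real.norm_of_nonneg hc]
  have hq : 0 < p.toReal := ENNReal.toReal_pos hp hp'
  rw [lpnorm_of_ne_top hp', lpnorm_of_ne_top hp']
  simp_rw [Pi.smul_apply, smul_eq_mul, abs_mul, abs_of_nonneg hc,
    Real.mul_rpow hc (abs_nonneg _), ← mul_sum]
  rw [Real.mul_rpow (by positivity) (by positivity), ← Real.rpow_mul hc,
    mul_one_div_cancel hq.ne', Real.rpow_one]

theorem lpnorm_zero (hp : p ≠ 0) : lpnorm p (0 : Fin N → ℝ) = 0 := by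
  simpa using lpnorm_smul hp le_rfl (0 : Fin N → ℝ)

end lpnorm

section holder

variable {N : ℕ} {p₁ p₂ : ℝ≥0∞}

theorem sum_abs_rpow_univ_eq_of_notMem {s : Finset (Fin N)} {x : Fin N → ℝ}
    (hx : ∀ i ∉ s, x i = 0) {q : ℝ} (hq : q ≠ 0) :
    ∑ i, |x i| ^ q = ∑ i ∈ s, |x i| ^ q :=
  (sum_subset (subset_univ s) fun i _ hi => by simp [hx i hi, Real.zero_rpow hq]).symm

theorem one_div_toReal_sub_one_div_toReal_pos (h₀ : 0 < p₂) (h₁ : p₂ < p₁) :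
    0 < 1 / p₂.toReal - 1 / p₁.toReal := by
  have hq₂ : 0 < p₂.toReal := ENNReal.toReal_pos h₀.ne' h₁.ne_top
  rcases eq_or_ne p₁ ∞ with rfl | hp₁
  · simpa using hq₂
  exact sub_pos.2 <| one_div_lt_one_div_of_lt hq₂ <| (ENNReal.toReal_lt_toReal h₁.ne_top hp₁).2 h₁

theorem lpnorm_le_card_rpow_mul_lpnorm (h₀ : 0 < p₂) (h₁ : p₂ < p₁) {s : Finset (Fin N)}
    {x : Fin N → ℝ} (hx : ∀ i ∉ s, x i = 0) :
    lpnorm p₂ x ≤ (#s : ℝ) ^ (1 / p₂.toReal - 1 / p₁.toReal) * lpnorm p₁ x := by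
  have hp₂ : p₂ ≠ ∞ := h₁.ne_top
  set q₂ := p₂.toReal
  have hq₂ : 0 < q₂ := ENNReal.toReal_pos h₀.ne' hp₂
  rw [lpnorm_of_ne_top hp₂, sum_abs_rpow_univ_eq_of_notMem hx hq₂.ne']
  rcases eq_or_ne p₁ ∞ with rfl | hp₁
  · have hle : ∑ i ∈ s, |x i| ^ q₂ ≤ #s * ‖x‖ ^ q₂ := by
      rw [← nsmul_eq_mul]
      refine sum_le_card_nsmul _ _ _ fun i _ => ?_
      gcongr
      simpa only [Real.norm_eq_abs] using norm_le_pi_norm x i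
    calc (∑ i ∈ s, |x i| ^ q₂) ^ (1 / q₂) ≤ (#s * ‖x‖ ^ q₂) ^ (1 / q₂) := by gcongr
      _ = _ := by
        rw [Real.mul_rpow (by positivity) (by positivity), ← Real.rpow_mul (norm_nonneg x),
          mul_one_div_cancel hq₂.ne', Real.rpow_one, lpnorm_top, ENNReal.toReal_top, div_zero,
          sub_zero]
  set q₁ := p₁.toReal
  have hq : q₂ < q₁ := (ENNReal.toReal_lt_toReal hp₂ hp₁).2 h₁
  have hq₁ : 0 < q₁ := hq₂.trans hq
  have hmean := Real.rpow_sum_le_const_mul_sum_rpow_of_nonneg (s := s)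
    (f := fun i => |x i| ^ q₂) ((one_le_div hq₂).2 hq.le) fun i _ => by positivity
  simp_rw [← Real.rpow_mul (abs_nonneg _), mul_div_cancel₀ _ hq₂.ne'] at hmean
  rw [lpnorm_of_ne_top hp₁, sum_abs_rpow_univ_eq_of_notMem hx hq₁.ne']
  calc (∑ i ∈ s, |x i| ^ q₂) ^ (1 / q₂)
      = ((∑ i ∈ s, |x i| ^ q₂) ^ (q₁ / q₂)) ^ (1 / q₁) := by
        rw [← Real.rpow_mul (by positivity)]
        field_simp
    _ ≤ ((#s : ℝ) ^ (q₁ / q₂ - 1) * ∑ i ∈ s, |x i| ^ q₁) ^ (1 / q₁) := by gcongr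
    _ = _ := by
        rw [Real.mul_rpow (by positivity) (by positivity), ← Real.rpow_mul (by positivity)]
        congr 2
        field_simp

theorem card_rpow_mul_lpnorm_le (h₀ : 0 < p₂) (h₁ : p₂ < p₁) {x : Fin N → ℝ}
    (hx : ∀ i, |x i| ≤ 1) {m : ℕ} (hm : m ≤ #{i | |x i| = 1}) :
    (m : ℝ) ^ (1 / p₂.toReal - 1 / p₁.toReal) * lpnorm p₁ x ≤ lpnorm p₂ x := by
  have hp₂ : p₂ ≠ ∞ := h₁.ne_top
  set q₂ := p₂.toReal
  set q₁ := p₁.toReal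
  have hq₂ : 0 < q₂ := ENNReal.toReal_pos h₀.ne' hp₂
  set T := ∑ i, |x i| ^ q₂
  have hmT : (m : ℝ) ≤ T := by
    calc (m : ℝ) ≤ #{i | |x i| = 1} := by exact_mod_cast hm
      _ = ∑ i ∈ ({i | |x i| = 1} : Finset (Fin N)), |x i| ^ q₂ := by
        rw [sum_congr rfl fun i hi => by rw [(mem_filter.1 hi).2, Real.one_rpow],
          sum_const, nsmul_one]
      _ ≤ T := sum_le_sum_of_subset_of_nonneg (filter_subset _ _) fun i _ _ => by positivity
  -- with the convention `1 / ∞.toReal = 0`, this also covers `p₁ = ∞`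
  have hle : lpnorm p₁ x ≤ T ^ (1 / q₁) := by
    rcases eq_or_ne p₁ ∞ with rfl | hp₁
    · rw [lpnorm_top, show q₁ = 0 from ENNReal.toReal_top, div_zero, Real.rpow_zero]
      exact pi_norm_le_iff_of_nonneg zero_le_one |>.2 hx
    have hq : q₂ < q₁ := (ENNReal.toReal_lt_toReal hp₂ hp₁).2 h₁
    rw [lpnorm_of_ne_top hp₁]
    refine Real.rpow_le_rpow (by positivity) (sum_le_sum fun i _ => ?_) (by positivity)
    exact Real.rpow_le_rpow_of_exponent_ge' (abs_nonneg _) (hx i) hq₂.le hq.le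
  have he := (one_div_toReal_sub_one_div_toReal_pos h₀ h₁).le
  calc (m : ℝ) ^ (1 / q₂ - 1 / q₁) * lpnorm p₁ x ≤ T ^ (1 / q₂ - 1 / q₁) * T ^ (1 / q₁) := by
        gcongr
        exact lpnorm_nonneg p₁ x
    _ = lpnorm p₂ x := by
        rw [← Real.rpow_add' (by positivity) (by simp [hq₂.ne']), sub_add_cancel,
          lpnorm_of_ne_top hp₂]

end holder

section extreme

variable {ι : Type*} [Fintype ι]

open Filter Topology Metric in
theorem eventually_norm_add_smul_le_one {x y : ι → ℝ} (hx : ‖x‖ ≤ 1)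
    (hy : ∀ i, |x i| = 1 → y i = 0) : ∀ᶠ t in 𝓝 (0 : ℝ), ‖x + t • y‖ ≤ 1 := by
  have hcoord : ∀ i, ∀ᶠ t in 𝓝 (0 : ℝ), |x i + t * y i| ≤ 1 := fun i => by
    by_cases hi : |x i| = 1
    · simp [hy i hi, hi]
    have hlt : |x i + (0 : ℝ) * y i| < 1 := by
      simpa using (norm_le_pi_norm x i).trans hx |>.lt_of_ne hi
    exact ((by fun_prop : Continuous fun t : ℝ => |x i + t * y i|).tendsto 0).eventually
      (gt_mem_nhds hlt) |>.mono fun _ => le_of_lt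
  filter_upwards [eventually_all.2 hcoord] with t ht
  exact pi_norm_le_iff_of_nonneg zero_le_one |>.2 ht

open Filter Topology in
/-- An extreme point `x` of `E ∩ closedBall 0 1` works: `E` contains no nonzero `y` vanishing
where `|x i| = 1`, since otherwise `x` would be the midpoint of `x ± t • y` for small `t > 0`. -/
theorem Submodule.exists_norm_le_one_finrank_le_card_abs_eq_one (E : Submodule ℝ (ι → ℝ)) :
    ∃ x ∈ E, ‖x‖ ≤ 1 ∧ Module.finrank ℝ E ≤ #{i | |x i| = 1} := by
  classical
  set K := (E : Set (ι → ℝ)) ∩ Metric.closedBall 0 1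
  have hK : IsCompact K := (isCompact_closedBall 0 1).inter_left E.closed_of_finiteDimensional
  obtain ⟨x, hx⟩ := hK.extremePoints_nonempty ⟨0, E.zero_mem, by simp⟩
  obtain ⟨⟨hxE, hx₁⟩, hext⟩ := mem_extremePoints.1 hx
  rw [mem_closedBall_zero_iff] at hx₁
  refine ⟨x, hxE, hx₁, ?_⟩
  set S : Finset ι := {i | |x i| = 1}
  have hzero : ∀ y ∈ E, (∀ i ∈ S, y i = 0) → y = 0 := by
    intro y hyE hyS
    have hnear := eventually_norm_add_smul_le_one hx₁ fun i hi => hyS i (by simpa [S] using hi)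
    have hboth : ∀ᶠ t in 𝓝[>] (0 : ℝ), (‖x + t • y‖ ≤ 1 ∧ ‖x + (-t) • y‖ ≤ 1) ∧ 0 < t :=
      ((hnear.and ((continuous_neg.tendsto' 0 0 neg_zero).eventually hnear)).filter_mono
        nhdsWithin_le_nhds).and self_mem_nhdsWithin
    obtain ⟨t, ⟨hpos, hneg⟩, ht⟩ := hboth.exists
    have hmem : ∀ s : ℝ, ‖x + s • y‖ ≤ 1 → x + s • y ∈ K := fun s hs =>
      ⟨E.add_mem hxE (E.smul_mem s hyE), mem_closedBall_zero_iff.2 hs⟩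
    have hmid : x ∈ openSegment ℝ (x + t • y) (x + (-t) • y) :=
      ⟨1 / 2, 1 / 2, by norm_num, by norm_num, by norm_num, by module⟩
    have := (hext _ (hmem t hpos) _ (hmem (-t) hneg) hmid).1
    exact (smul_eq_zero.1 (add_eq_left.1 this)).resolve_left (ne_of_gt ht)
  let restrict : E →ₗ[ℝ] (S → ℝ) := LinearMap.funLeft ℝ ℝ Subtype.val ∘ₗ E.subtype
  have hinj : Function.Injective restrict := by
    refine (injective_iff_map_eq_zero restrict).2 fun y hy => Subtype.ext <| hzero y y.2 ?_
    exact fun i hi => congrFun hy ⟨i, hi⟩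
  simpa only [Module.finrank_fintype_fun_eq_card, Fintype.card_coe] using
    LinearMap.finrank_le_finrank_of_injective hinj

end extreme

theorem LinearMap.finrank_add_one_sub_le_finrank_ker {K V W : Type*} [DivisionRing K]
    [AddCommGroup V] [Module K V] [FiniteDimensional K V] [AddCommGroup W] [Module K W]
    (f : V →ₗ[K] W) {k : ℕ} (hf : Module.rank K (LinearMap.range f) < k) :
    Module.finrank K V + 1 - k ≤ Module.finrank K (LinearMap.ker f) := by
  have hrange : Module.finrank K (LinearMap.range f) < k := by
    rwa [← Module.finrank_eq_rank, Nat.cast_lt] at hf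
  have := f.finrank_range_add_finrank_ker
  omega

noncomputable def coordProj {ι : Type*} (T : Finset ι) : (ι → ℝ) →ₗ[ℝ] (ι → ℝ) :=
  Function.ExtendByZero.linearMap ℝ ((↑) : T → ι) ∘ₗ LinearMap.funLeft ℝ ℝ (↑)

theorem coordProj_apply_of_mem {ι : Type*} {T : Finset ι} (x : ι → ℝ) {i : ι} (hi : i ∈ T) :
    coordProj T x i = x i :=
  Subtype.val_injective.extend_apply (fun j : T => x j) 0 ⟨i, hi⟩

theorem coordProj_apply_of_notMem {ι : Type*} {T : Finset ι} (x : ι → ℝ) {i : ι} (hi : i ∉ T) :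
    coordProj T x i = 0 :=
  Function.extend_apply' _ _ _ fun ⟨j, hj⟩ => hi (hj ▸ j.2)

theorem rank_range_coordProj_le {ι : Type*} (T : Finset ι) :
    Module.rank ℝ (LinearMap.range (coordProj T)) ≤ #T := by
  calc Module.rank ℝ (LinearMap.range (coordProj T))
      ≤ Module.rank ℝ (LinearMap.range (Function.ExtendByZero.linearMap ℝ ((↑) : T → ι))) :=
        LinearMap.rank_comp_le_left _ _
    _ ≤ Module.rank ℝ (T → ℝ) := rank_range_le _
    _ = #T := by simp

noncomputable def normIdSub (p₁ p₂ : ℝ≥0∞) {N : ℕ} (A : (Fin N → ℝ) →ₗ[ℝ] (Fin N → ℝ)) : ℝ :=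
  sSup {c : ℝ | ∃ x : Fin N → ℝ, lpnorm p₁ x ≤ 1 ∧ c = lpnorm p₂ (x - A x)}

section normIdSub

variable {N : ℕ} {p₁ p₂ : ℝ≥0∞} (A : (Fin N → ℝ) →ₗ[ℝ] (Fin N → ℝ))

theorem bddAbove_lpnorm_sub_image (hp₁ : p₁ ≠ 0) :
    BddAbove {c : ℝ | ∃ x : Fin N → ℝ, lpnorm p₁ x ≤ 1 ∧ c = lpnorm p₂ (x - A x)} := by
  set A' := LinearMap.toContinuousLinearMap A
  refine ⟨lpnorm p₂ fun _ : Fin N => 1 + ‖A'‖, ?_⟩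
  rintro _ ⟨x, hx, rfl⟩
  have hx' : ‖x‖ ≤ 1 := (norm_le_lpnorm hp₁ x).trans hx
  refine lpnorm_mono fun i => ?_
  calc |(x - A x) i| ≤ ‖x - A' x‖ := norm_le_pi_norm (x - A x) i
    _ ≤ ‖x‖ + ‖A'‖ * ‖x‖ := (norm_sub_le _ _).trans (by gcongr; exact A'.le_opNorm x)
    _ ≤ 1 + ‖A'‖ := by gcongr; exact mul_le_of_le_one_right (norm_nonneg _) hx'
    _ = |1 + ‖A'‖| := (abs_of_nonneg (by positivity)).symm

theorem normIdSub_le (hp₁ : p₁ ≠ 0) {c : ℝ}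
    (h : ∀ x, lpnorm p₁ x ≤ 1 → lpnorm p₂ (x - A x) ≤ c) : normIdSub p₁ p₂ A ≤ c :=
  csSup_le ⟨_, 0, (lpnorm_zero hp₁).trans_le zero_le_one, rfl⟩ fun _ ⟨x, hx, hc⟩ => hc ▸ h x hx

theorem le_normIdSub_of_map_eq_zero (hp₁ : p₁ ≠ 0) (hp₂ : p₂ ≠ 0) {z : Fin N → ℝ} (hz : A z = 0)
    (hz₁ : 0 < lpnorm p₁ z) {c : ℝ} (hc : c * lpnorm p₁ z ≤ lpnorm p₂ z) :
    c ≤ normIdSub p₁ p₂ A := by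
  set L := lpnorm p₁ z
  have hL : 0 ≤ L⁻¹ := inv_nonneg.2 hz₁.le
  calc c ≤ L⁻¹ * lpnorm p₂ z := by rwa [le_inv_mul_iff₀ hz₁, mul_comm]
    _ = lpnorm p₂ (L⁻¹ • z - A (L⁻¹ • z)) := by
        rw [map_smul, hz, smul_zero, sub_zero, lpnorm_smul hp₂ hL]
    _ ≤ normIdSub p₁ p₂ A := le_csSup (bddAbove_lpnorm_sub_image A hp₁)
        ⟨L⁻¹ • z, by rw [lpnorm_smul hp₁ hL, inv_mul_cancel₀ hz₁.ne'], rfl⟩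

theorem normIdSub_coordProj_le (h₀ : 0 < p₂) (h₁ : p₂ < p₁) (T : Finset (Fin N)) :
    normIdSub p₁ p₂ (coordProj T) ≤ (#Tᶜ : ℝ) ^ (1 / p₂.toReal - 1 / p₁.toReal) := by
  refine normIdSub_le _ (h₀.trans h₁).ne' fun x hx => ?_
  have hzero : ∀ i ∉ Tᶜ, (x - coordProj T x) i = 0 := fun i hi => by
    rw [Pi.sub_apply, coordProj_apply_of_mem x (by simpa using hi), sub_self]
  have hle : ∀ i, |(x - coordProj T x) i| ≤ |x i| := fun i => by
    by_cases hi : i ∈ T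
    · simp [coordProj_apply_of_mem x hi]
    · simp [coordProj_apply_of_notMem x hi]
  calc lpnorm p₂ (x - coordProj T x)
      ≤ (#Tᶜ : ℝ) ^ (1 / p₂.toReal - 1 / p₁.toReal) * lpnorm p₁ (x - coordProj T x) :=
        lpnorm_le_card_rpow_mul_lpnorm h₀ h₁ hzero
    _ ≤ (#Tᶜ : ℝ) ^ (1 / p₂.toReal - 1 / p₁.toReal) * 1 := by
        gcongr
        exact (lpnorm_mono hle).trans hx
    _ = _ := mul_one _

theorem rpow_le_normIdSub (h₀ : 0 < p₂) (h₁ : p₂ < p₁) {m : ℕ} (hm : 0 < m)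
    (hmA : m ≤ Module.finrank ℝ (LinearMap.ker A)) :
    (m : ℝ) ^ (1 / p₂.toReal - 1 / p₁.toReal) ≤ normIdSub p₁ p₂ A := by
  have hp₁ : p₁ ≠ 0 := (h₀.trans h₁).ne'
  obtain ⟨x, hxA, hx, hcard⟩ := (LinearMap.ker A).exists_norm_le_one_finrank_le_card_abs_eq_one
  obtain ⟨i, hi⟩ := card_pos.1 (hm.trans_le (hmA.trans hcard))
  rw [mem_filter_univ] at hi
  refine le_normIdSub_of_map_eq_zero A hp₁ h₀.ne' hxA ?_ <|
    card_rpow_mul_lpnorm_le h₀ h₁ (fun j => (norm_le_pi_norm x j).trans hx) (hmA.trans hcard)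
  exact zero_lt_one.trans_le (hi ▸ abs_le_lpnorm hp₁ x i)

end normIdSub

theorem approxNumId_eq_of_le_of_forall_le {p₁ p₂ : ℝ≥0∞} {N k : ℕ} {c : ℝ}
    (A₀ : (Fin N → ℝ) →ₗ[ℝ] (Fin N → ℝ)) (hA₀ : Module.rank ℝ (LinearMap.range A₀) < k)
    (hA₀c : normIdSub p₁ p₂ A₀ ≤ c)
    (h : ∀ A : (Fin N → ℝ) →ₗ[ℝ] (Fin N → ℝ), Module.rank ℝ (LinearMap.range A) < k →
      c ≤ normIdSub p₁ p₂ A) :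
    approxNumId p₁ p₂ N k = c := by
  have hlower : ∀ r ∈ {r : ℝ | ∃ A : (Fin N → ℝ) →ₗ[ℝ] (Fin N → ℝ),
      Module.rank ℝ (LinearMap.range A) < k ∧ r = normIdSub p₁ p₂ A}, c ≤ r := by
    rintro _ ⟨A, hA, rfl⟩
    exact h A hA
  exact le_antisymm ((csInf_le ⟨c, hlower⟩ ⟨A₀, hA₀, rfl⟩).trans hA₀c)
    (le_csInf ⟨_, A₀, hA₀, rfl⟩ hlower)

theorem approx_number_id_finite_lp_exact_general
    (p₁ p₂ : ℝ≥0∞) (h₀ : 0 < p₂) (h₁ : p₂ < p₁)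
    (N k : ℕ) (hk : 1 ≤ k) (hkN : k ≤ N) :
    approxNumId p₁ p₂ N k = ((N - k + 1 : ℕ) : ℝ) ^ (1 / p₂.toReal - 1 / p₁.toReal) := by
  obtain ⟨T, -, hT⟩ := exists_subset_card_eq (s := (univ : Finset (Fin N))) (n := k - 1)
    (by rw [card_univ, Fintype.card_fin]; omega)
  have hTc : #Tᶜ = N - k + 1 := by rw [card_compl, Fintype.card_fin, hT]; omega
  have hrank : Module.rank ℝ (LinearMap.range (coordProj T)) < k :=
    (rank_range_coordProj_le T).trans_lt (by rw [hT]; exact_mod_cast (by omega))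
  refine approxNumId_eq_of_le_of_forall_le _ hrank (hTc ▸ normIdSub_coordProj_le h₀ h₁ T)
    fun A hA => rpow_le_normIdSub A h₀ h₁ (Nat.succ_pos _) ?_
  have hker := A.finrank_add_one_sub_le_finrank_ker hA
  rw [Module.finrank_fin_fun] at hker
  omega

/-- If `0 < p₂ < p₁ ≤ ∞` and `1 ≤ k ≤ N`, then
`a_k(id : ℓ_{p₁}^N → ℓ_{p₂}^N) = (N - k + 1)^{1/p₂ - 1/p₁}` (with `1/∞ = 0`). -/
theorem approx_number_id_finite_lp_exact
    (p₁ p₂ : ℝ≥0∞) (h₀ : 0 < p₂) (h₁ : p₂ < p₁) (h₂ : p₁ ≤ ∞)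
    (N k : ℕ) (hk : 1 ≤ k) (hkN : k ≤ N) :
    approxNumId p₁ p₂ N k = ((N - k + 1 : ℕ) : ℝ) ^ (1 / p₂.toReal - 1 / p₁.toReal) :=
  approx_number_id_finite_lp_exact_general p₁ p₂ h₀ h₁ N k hk hkN
end

section
/- Let ρ > 0, let φ belong to the class 𝒱 with β_φ := sup_{t>1} (log φ̲(t))/(log t), and let γ ∈ ℝ with γ < β_φ. Then sup_{M ≥ 1} φ(2^M)^ρ 2^{−Mγρ} Σ_{m=M+1}^{∞} 2^{mγρ} φ(2^m)^{−ρ} < ∞ (in particular each series Σ_{m=M+1}^{∞} 2^{mγρ} φ(2^m)^{−ρ} converges). -/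
open scoped ENNReal

/-- `φ̲(t) = inf_{s ≥ 1} φ(ts)/φ(s)`. -/
noncomputable def lowerRatio (φ : ℝ → ℝ) (t : ℝ) : ℝ :=
  sInf {r : ℝ | ∃ s : ℝ, 1 ≤ s ∧ r = φ (t * s) / φ s}

/-- `φ̄(t) = sup_{s ≥ 1} φ(ts)/φ(s)`. -/
noncomputable def upperRatio (φ : ℝ → ℝ) (t : ℝ) : ℝ :=
  sSup {r : ℝ | ∃ s : ℝ, 1 ≤ s ∧ r = φ (t * s) / φ s}

/-- A measurable function `φ : [1,∞) → (0,∞)` belongs to the class `𝒱` if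
`φ̲` and `φ̄` are measurable and `0 < φ̲(t)` and `φ̄(t) < ∞` for all `t ≥ 1`
(finiteness of `φ̄(t)` is expressed by boundedness of the defining set). -/
structure ClassV (φ : ℝ → ℝ) : Prop where
  pos : ∀ s : ℝ, 1 ≤ s → 0 < φ s
  meas : Measurable fun s : Set.Ici (1 : ℝ) => φ s
  lower_pos : ∀ t : ℝ, 1 ≤ t → 0 < lowerRatio φ t
  upper_bdd : ∀ t : ℝ, 1 ≤ t → BddAbove {r : ℝ | ∃ s : ℝ, 1 ≤ s ∧ r = φ (t * s) / φ s}
  lower_meas : Measurable fun t : Set.Ici (1 : ℝ) => lowerRatio φ t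
  upper_meas : Measurable fun t : Set.Ici (1 : ℝ) => upperRatio φ t

/-- `α_φ = inf_{t > 1} log φ̄(t) / log t`. -/
noncomputable def alphaV (φ : ℝ → ℝ) : ℝ :=
  sInf {r : ℝ | ∃ t : ℝ, 1 < t ∧ r = Real.log (upperRatio φ t) / Real.log t}

/-- `β_φ = sup_{t > 1} log φ̲(t) / log t`. -/
noncomputable def betaV (φ : ℝ → ℝ) : ℝ :=
  sSup {r : ℝ | ∃ t : ℝ, 1 < t ∧ r = Real.log (lowerRatio φ t) / Real.log t}

/-!
Since `φ̲` is supermultiplicative, `F = log φ̲ ∘ exp` is superadditive on `[0, ∞)`, and it is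
measurable. By Steinhaus' argument such an `F` is bounded below on compact subsets of `(0, ∞)`, so
`F ℓ ≥ r ℓ` at a single point `ℓ` propagates to `F x ≥ r x - D` for all `x` bounded away from `0`.
Choosing `t₀` with `r = log φ̲(t₀) / log t₀ > γ` gives
`φ(2^(M+k)) ≥ φ̲(2^k) φ(2^M) ≳ 2^(kr) φ(2^M)`, so the tail from `M + 1` on is at most
`2^(Mγρ) φ(2^M)^(-ρ)` times a geometric series of ratio `2^((γ - r)ρ) < 1`.
-/

open MeasureTheory Real Set

lemma exists_lt_measure_inter_preimage_Ici {α : Type*} [MeasurableSpace α] (μ : Measure α)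
    (f : α → ℝ) {s : Set α} {c : ℝ≥0∞} (hc : c < μ s) :
    ∃ N : ℕ, c < μ (s ∩ f ⁻¹' Ici (-N)) := by
  have hmono : Monotone fun n : ℕ => s ∩ f ⁻¹' Ici (-n) := fun m n hmn x hx =>
    ⟨hx.1, show -(n : ℝ) ≤ f x from (neg_le_neg (Nat.cast_le.2 hmn)).trans hx.2⟩
  have hunion : ⋃ n : ℕ, s ∩ f ⁻¹' Ici (-n) = s := by
    refine (iUnion_subset fun n => inter_subset_left).antisymm fun x hx => ?_
    obtain ⟨n, hn⟩ := exists_nat_ge (-f x)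
    exact mem_iUnion.2 ⟨n, hx, show -(n : ℝ) ≤ f x by linarith⟩
  rw [← hunion, hmono.measure_iUnion] at hc
  exact lt_iSup_iff.1 hc

lemma exists_mem_sub_mem_of_volume_gt {E : Set ℝ} {L v : ℝ} (hE : MeasurableSet E)
    (hEL : E ⊆ Icc 0 L) (hLv : L ≤ v) (hvol : ENNReal.ofReal v < 2 * volume E) :
    ∃ x ∈ E, v - x ∈ E := by
  have hE' : MeasurableSet ((v - ·) ⁻¹' E) := hE.preimage (by fun_prop)
  have hvol' : volume ((v - ·) ⁻¹' E) = volume E :=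
    (Measure.measurePreserving_sub_left volume v).measure_preimage hE.nullMeasurableSet
  have hsub : E ⊆ Icc 0 v := fun x hx => ⟨(hEL hx).1, (hEL hx).2.trans hLv⟩
  have hsub' : (v - ·) ⁻¹' E ⊆ Icc 0 v := fun x hx => by
    have := hEL hx
    simp only [mem_Icc] at this ⊢
    constructor <;> linarith
  have hlt : volume (Icc 0 v) < volume E + volume ((v - ·) ⁻¹' E) := by
    rwa [Real.volume_Icc, hvol', sub_zero, ← two_mul]
  exact nonempty_inter_of_measure_lt_add volume hE' hsub hsub' hlt

section Superadditive

variable {F : ℝ → ℝ}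

lemma superadditive_natCast_mul_le (hF : ∀ x y, 0 ≤ x → 0 ≤ y → F x + F y ≤ F (x + y))
    {x : ℝ} (hx : 0 ≤ x) {k : ℕ} (hk : 1 ≤ k) : k * F x ≤ F (k * x) := by
  induction k, hk using Nat.le_induction with
  | base => simp
  | succ k _ ih =>
    have h := hF (k * x) x (by positivity) hx
    push_cast
    rw [add_one_mul, add_one_mul]
    linarith

theorem exists_le_of_superadditive (hmeas : Measurable F)
    (hF : ∀ x y, 0 ≤ x → 0 ≤ y → F x + F y ≤ F (x + y)) {a b : ℝ} (ha : 0 < a) :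
    ∃ C, ∀ v ∈ Icc a b, C ≤ F v := by
  set L := a / 2 with hL
  have hL0 : 0 < L := by positivity
  set X : ℕ → Set ℝ := fun n => Icc 0 L ∩ F ⁻¹' Ici (-n)
  obtain ⟨N, hN⟩ : ∃ N, ENNReal.ofReal (3 * L / 4) < volume (X N) :=
    exists_lt_measure_inter_preimage_Ici volume F
      (by rw [Real.volume_Icc]; exact (ENNReal.ofReal_lt_ofReal_iff (by linarith)).2 (by linarith))
  -- Steinhaus: `w` is the sum of two points of `X N`, so `F w ≥ -2N`.
  have hbase : ∀ w ∈ Icc L (3 * L / 2), -(2 * N : ℝ) ≤ F w := by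
    rintro w ⟨hw₁, hw₂⟩
    have hvol : ENNReal.ofReal w < 2 * volume (X N) :=
      calc ENNReal.ofReal w ≤ ENNReal.ofReal (3 * L / 4) + ENNReal.ofReal (3 * L / 4) :=
            (ENNReal.ofReal_le_ofReal (by linarith)).trans ENNReal.ofReal_add_le
        _ < 2 * volume (X N) := (ENNReal.add_lt_add hN hN).trans_eq (two_mul _).symm
    obtain ⟨x, hx, hwx⟩ := exists_mem_sub_mem_of_volume_gt
      (measurableSet_Icc.inter (hmeas measurableSet_Ici)) inter_subset_left hw₁ hvol
    have h := hF x (w - x) hx.1.1 hwx.1.1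
    rw [add_sub_cancel] at h
    linarith [show -(N : ℝ) ≤ F x from hx.2, show -(N : ℝ) ≤ F (w - x) from hwx.2]
  refine ⟨-(2 * N * (b / L)), fun v ⟨hav, hvb⟩ => ?_⟩
  set k := ⌊v / L⌋₊
  have hvL : 2 ≤ v / L := by rw [le_div_iff₀ hL0]; linarith
  have hk_le : (k : ℝ) ≤ v / L := Nat.floor_le (by linarith)
  have hk_lt : v / L < k + 1 := Nat.lt_floor_add_one _
  have hk2 : (2 : ℝ) ≤ k := by exact_mod_cast Nat.le_floor (by exact_mod_cast hvL)
  have hk0 : (0 : ℝ) < k := by linarith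
  have hw : v / k ∈ Icc L (3 * L / 2) := by
    rw [le_div_iff₀ hL0] at hk_le
    rw [div_lt_iff₀ hL0] at hk_lt
    constructor
    · rw [le_div_iff₀ hk0]; linarith
    · rw [div_le_iff₀ hk0]; nlinarith
  calc -(2 * N * (b / L)) ≤ k * -(2 * N : ℝ) := by
        have : (k : ℝ) ≤ b / L := hk_le.trans (by gcongr)
        nlinarith [(N.cast_nonneg : (0 : ℝ) ≤ N)]
    _ ≤ k * F (v / k) := mul_le_mul_of_nonneg_left (hbase _ hw) hk0.le
    _ ≤ F (k * (v / k)) :=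
        superadditive_natCast_mul_le hF (div_nonneg (by linarith) hk0.le)
          (by exact_mod_cast hk2.trans' one_le_two)
    _ = F v := by rw [mul_div_cancel₀ _ hk0.ne']

theorem exists_linear_le_of_superadditive (hmeas : Measurable F)
    (hF : ∀ x y, 0 ≤ x → 0 ≤ y → F x + F y ≤ F (x + y)) {ℓ r a : ℝ} (hℓ : 0 < ℓ)
    (hr : r * ℓ ≤ F ℓ) (ha : 0 < a) : ∃ D, ∀ x, a ≤ x → r * x - D ≤ F x := by
  obtain ⟨C, hC⟩ := exists_le_of_superadditive hmeas hF (b := 2 * ℓ) (lt_min ha hℓ)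
  have key : ∀ n : ℕ, ∀ x ∈ Icc (min a ℓ) ((n + 2) * ℓ), r * x - (2 * |r| * ℓ - C) ≤ F x := by
    intro n
    induction n with
    | zero =>
      intro x hx
      have hx0 : 0 ≤ x := (lt_min ha hℓ).le.trans hx.1
      have hx2 : x ≤ 2 * ℓ := by simpa using hx.2
      have := hC x ⟨hx.1, hx2⟩
      nlinarith [le_abs_self r, abs_nonneg r]
    | succ n ih =>
      rintro x ⟨hx₁, hx₂⟩
      by_cases hxn : x ≤ (n + 2) * ℓ
      · exact ih x ⟨hx₁, hxn⟩
      have hxℓ := ih (x - ℓ) ⟨by push_cast at hx₂ ⊢; nlinarith [min_le_right a ℓ], by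
        push_cast at hx₂; linarith⟩
      have hsplit := hF (x - ℓ) ℓ (by nlinarith [n.cast_nonneg (α := ℝ)]) hℓ.le
      rw [sub_add_cancel] at hsplit
      linarith
  refine ⟨2 * |r| * ℓ - C, fun x hx => ?_⟩
  obtain ⟨n, hn⟩ := exists_nat_ge (x / ℓ)
  rw [div_le_iff₀ hℓ] at hn
  exact key n x ⟨(min_le_left a ℓ).trans hx, by linarith⟩

end Superadditive

theorem summable_exp_neg_tail_and_le {ψ : ℕ → ℝ} {δ D : ℝ} (hδ : 0 < δ)
    (hψ : ∀ n k : ℕ, ψ n + δ * k - D ≤ ψ (k + (n + 1))) (n : ℕ) :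
    Summable (fun k : ℕ => exp (-ψ (k + (n + 1)))) ∧
      exp (ψ n) * ∑' k : ℕ, exp (-ψ (k + (n + 1))) ≤ exp D / (1 - exp (-δ)) := by
  have hq : exp (-δ) < 1 := exp_lt_one_iff.2 (by linarith)
  have hle : ∀ k : ℕ, exp (-ψ (k + (n + 1))) ≤ exp (D - ψ n) * exp (-δ) ^ k := fun k => by
    rw [← exp_nat_mul, ← exp_add]
    exact exp_le_exp.2 (by linarith [hψ n k])
  have hgeom := summable_geometric_of_lt_one (exp_pos _).le hq
  have hsum := (hgeom.mul_left (exp (D - ψ n))).of_nonneg_of_le (fun k => (exp_pos _).le) hle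
  have htsum : ∑' k : ℕ, exp (-ψ (k + (n + 1))) ≤ exp (D - ψ n) * (1 - exp (-δ))⁻¹ := by
    rw [← tsum_geometric_of_lt_one (exp_pos _).le hq, ← tsum_mul_left]
    exact hsum.tsum_le_tsum hle (hgeom.mul_left _)
  refine ⟨hsum, ?_⟩
  calc exp (ψ n) * ∑' k : ℕ, exp (-ψ (k + (n + 1)))
      ≤ exp (ψ n) * (exp (D - ψ n) * (1 - exp (-δ))⁻¹) :=
        mul_le_mul_of_nonneg_left htsum (exp_pos _).le
    _ = exp D / (1 - exp (-δ)) := by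
        rw [exp_sub]
        field_simp

namespace ClassV

variable {φ : ℝ → ℝ}

lemma lowerRatio_mul_le (hφ : ClassV φ) {t s : ℝ} (ht : 1 ≤ t) (hs : 1 ≤ s) :
    lowerRatio φ t * φ s ≤ φ (t * s) := by
  rw [← le_div_iff₀ (hφ.pos s hs)]
  refine csInf_le ⟨0, ?_⟩ ⟨s, hs, rfl⟩
  rintro _ ⟨u, hu, rfl⟩
  exact div_nonneg (hφ.pos _ (one_le_mul_of_one_le_of_one_le ht hu)).le (hφ.pos u hu).le

lemma lowerRatio_mul_lowerRatio_le (hφ : ClassV φ) {a b : ℝ} (ha : 1 ≤ a) (hb : 1 ≤ b) :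
    lowerRatio φ a * lowerRatio φ b ≤ lowerRatio φ (a * b) := by
  refine le_csInf ⟨_, 1, le_rfl, rfl⟩ ?_
  rintro _ ⟨s, hs, rfl⟩
  rw [le_div_iff₀ (hφ.pos s hs), mul_assoc, mul_assoc]
  calc lowerRatio φ a * (lowerRatio φ b * φ s) ≤ lowerRatio φ a * φ (b * s) :=
        mul_le_mul_of_nonneg_left (hφ.lowerRatio_mul_le hb hs) (hφ.lower_pos a ha).le
    _ ≤ φ (a * (b * s)) := hφ.lowerRatio_mul_le ha (one_le_mul_of_one_le_of_one_le hb hs)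

theorem exists_log_lowerRatio_exp_ge (hφ : ClassV φ) {t₀ a : ℝ} (ht₀ : 1 < t₀) (ha : 0 < a) :
    ∃ D, ∀ x, a ≤ x → log (lowerRatio φ t₀) / log t₀ * x - D ≤ log (lowerRatio φ (exp x)) := by
  -- `|x|` extends `log φ̲ ∘ exp` measurably from `[0, ∞)` to `ℝ`.
  set F : ℝ → ℝ := fun x => log (lowerRatio φ (exp |x|))
  have hFexp : ∀ x, 0 ≤ x → F x = log (lowerRatio φ (exp x)) := fun x hx => by
    simp only [F, abs_of_nonneg hx]
  have hmeas : Measurable F := measurable_log.comp (hφ.lower_meas.comp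
    (Measurable.subtype_mk (f := fun x : ℝ => exp |x|) (h := fun x => one_le_exp (abs_nonneg x))
      (by fun_prop)))
  have hsuper : ∀ x y, 0 ≤ x → 0 ≤ y → F x + F y ≤ F (x + y) := by
    intro x y hx hy
    have hx' := hφ.lower_pos _ (one_le_exp hx)
    have hy' := hφ.lower_pos _ (one_le_exp hy)
    rw [hFexp x hx, hFexp y hy, hFexp _ (add_nonneg hx hy), exp_add, ← log_mul hx'.ne' hy'.ne']
    exact log_le_log (mul_pos hx' hy')
      (hφ.lowerRatio_mul_lowerRatio_le (one_le_exp hx) (one_le_exp hy))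
  have hℓ := log_pos ht₀
  obtain ⟨D, hD⟩ := exists_linear_le_of_superadditive hmeas hsuper hℓ
    (r := log (lowerRatio φ t₀) / log t₀) (a := a)
    (by rw [hFexp _ hℓ.le, exp_log (by linarith), div_mul_cancel₀ _ hℓ.ne']) ha
  exact ⟨D, fun x hx => hFexp x (ha.le.trans hx) ▸ hD x hx⟩

theorem exists_log_two_pow_add_ge (hφ : ClassV φ) {t₀ : ℝ} (ht₀ : 1 < t₀) :
    ∃ D, ∀ n k : ℕ, log (φ (2 ^ n)) + log (lowerRatio φ t₀) / log t₀ * ((k + 1) * log 2) - D ≤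
      log (φ (2 ^ (k + (n + 1)))) := by
  obtain ⟨D, hD⟩ := hφ.exists_log_lowerRatio_exp_ge ht₀ (log_pos one_lt_two)
  refine ⟨D, fun n k => ?_⟩
  have hlow := hD ((k + 1) * log 2) (le_mul_of_one_le_left (log_pos one_lt_two).le (by simp))
  rw [← Nat.cast_add_one, exp_nat_mul, exp_log two_pos] at hlow
  have h1 := hφ.lower_pos _ (one_le_pow₀ (one_le_two (α := ℝ)) (n := k + 1))
  have h2 := hφ.pos (2 ^ n) (one_le_pow₀ one_le_two)
  have hmul : log (lowerRatio φ (2 ^ (k + 1))) + log (φ (2 ^ n)) ≤ log (φ (2 ^ (k + (n + 1)))) := by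
    rw [← log_mul h1.ne' h2.ne', show k + (n + 1) = (k + 1) + n by ring, pow_add (2 : ℝ) (k + 1) n]
    exact log_le_log (mul_pos h1 h2)
      (hφ.lowerRatio_mul_le (one_le_pow₀ one_le_two) (one_le_pow₀ one_le_two))
  push_cast at hlow
  linarith

end ClassV

/-- Let `ρ > 0`, `φ ∈ 𝒱` and `γ < β_φ`.  Then each tail series
`∑_{m=M+1}^{∞} 2^{mγρ} φ(2^m)^{-ρ}` converges and
`sup_{M ≥ 1} φ(2^M)^ρ 2^{-Mγρ} ∑_{m=M+1}^{∞} 2^{mγρ} φ(2^m)^{-ρ} < ∞`. -/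
theorem classV_tail_sum_bound_beta (ρ : ℝ) (hρ : 0 < ρ) (φ : ℝ → ℝ) (hφ : ClassV φ)
    (γ : ℝ) (hγ : γ < betaV φ) :
    (∀ M : ℕ, 1 ≤ M →
      Summable (fun m : ℕ =>
        (2 : ℝ) ^ (((m + (M + 1) : ℕ) : ℝ) * γ * ρ) * φ ((2 : ℝ) ^ (m + (M + 1))) ^ (-ρ))) ∧
    ∃ C : ℝ, ∀ M : ℕ, 1 ≤ M →
      φ ((2 : ℝ) ^ M) ^ ρ * (2 : ℝ) ^ (-(M : ℝ) * γ * ρ) *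
        ∑' m : ℕ,
          (2 : ℝ) ^ (((m + (M + 1) : ℕ) : ℝ) * γ * ρ) * φ ((2 : ℝ) ^ (m + (M + 1))) ^ (-ρ)
        ≤ C := by
  obtain ⟨_, ⟨t₀, ht₀, rfl⟩, hγr⟩ := exists_lt_of_lt_csSup (by exact ⟨_, 2, one_lt_two, rfl⟩) hγ
  set r := log (lowerRatio φ t₀) / log t₀
  obtain ⟨D, hD⟩ := hφ.exists_log_two_pow_add_ge ht₀
  have hφ2 : ∀ n : ℕ, 0 < φ (2 ^ n) := fun n => hφ.pos _ (one_le_pow₀ one_le_two)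
  have hslope : 0 < (r - γ) * log 2 := mul_pos (sub_pos.2 hγr) (log_pos one_lt_two)
  set ψ : ℕ → ℝ := fun n => log (φ (2 ^ n)) - n * γ * log 2
  have hψ : ∀ n k : ℕ, ψ n + (r - γ) * log 2 * k - D ≤ ψ (k + (n + 1)) := fun n k => by
    have hgrowth := hD n k
    simp only [ψ]
    push_cast
    nlinarith
  have htail := summable_exp_neg_tail_and_le (ψ := fun n => ρ * ψ n) (D := ρ * D)
    (mul_pos hρ hslope)
    (fun n k => by linarith [mul_le_mul_of_nonneg_left (hψ n k) hρ.le])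
  have hterm : ∀ n : ℕ, (2 : ℝ) ^ ((n : ℝ) * γ * ρ) * φ (2 ^ n) ^ (-ρ) = exp (-(ρ * ψ n)) :=
    fun n => by
      rw [rpow_def_of_pos two_pos, rpow_def_of_pos (hφ2 n), ← exp_add]
      simp only [ψ]
      ring_nf
  have hpre : ∀ n : ℕ, φ (2 ^ n) ^ ρ * (2 : ℝ) ^ (-(n : ℝ) * γ * ρ) = exp (ρ * ψ n) :=
    fun n => by
      rw [rpow_def_of_pos two_pos, rpow_def_of_pos (hφ2 n), ← exp_add]
      simp only [ψ]
      ring_nf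
  refine ⟨fun M _ => ?_, exp (ρ * D) / (1 - exp (-(ρ * ((r - γ) * log 2)))), fun M _ => ?_⟩
  · simpa only [hterm] using (htail M).1
  · simpa only [hterm, hpre] using (htail M).2
end
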